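/- For T admitting an A-adjoint and α ∈ [0,1], ‖T‖_{A,α}² ≥ 2 sqrt(α(1−α)) · w_A(T) · sqrt(c_A(T^{♯A}T)). -/

import Mathlib

open scoped ComplexOrder
open ContinuousLinearMap Filter Topology

variable {H : Type*} [NormedAddCommGroup H] [InnerProductSpace ℂ H] [CompleteSpace H]

/-- The A-semi-inner product `⟨x, y⟩_A = ⟨A x, y⟩` (Mathlib convention: conjugate
linear in the first variable). -/
noncomputable def aInner (A : H →L[ℂ] H) (x y : H) : ℂ := inner ℂ (A x) y

/-- The A-seminorm `‖x‖_A = sqrt ⟨x, x⟩_A`. -/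
noncomputable def aNorm (A : H →L[ℂ] H) (x : H) : ℝ := Real.sqrt (aInner A x x).re

/-- `T` is A-bounded. -/
def ABounded (A T : H →L[ℂ] H) : Prop := ∃ c > 0, ∀ x, aNorm A (T x) ≤ c * aNorm A x

/-- The A-operator seminorm. -/
noncomputable def opNormA (A T : H →L[ℂ] H) : ℝ :=
  sSup {r | ∃ x ∈ closure (Set.range A), aNorm A x = 1 ∧ r = aNorm A (T x)}

/-- The A-numerical radius. -/
noncomputable def wA (A T : H →L[ℂ] H) : ℝ :=
  sSup {r | ∃ x, aNorm A x = 1 ∧ r = ‖aInner A (T x) x‖}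

/-- The A-Crawford number. -/
noncomputable def cA (A T : H →L[ℂ] H) : ℝ :=
  sInf {r | ∃ x, aNorm A x = 1 ∧ r = ‖aInner A (T x) x‖}

/-- The `A_α`-seminorm `‖T‖_{A,α}`. -/
noncomputable def alphaNorm (A T : H →L[ℂ] H) (α : ℝ) : ℝ :=
  sSup {r | ∃ x, aNorm A x = 1 ∧
    r = Real.sqrt (α * ‖aInner A (T x) x‖ ^ 2 + (1 - α) * aNorm A (T x) ^ 2)}

/-- `S` is the A-adjoint `T^{♯_A}` of `T`: the solution of `A X = T* A` whose
range lies in the closure of the range of `A`. -/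
def IsAAdjoint (A T S : H →L[ℂ] H) : Prop :=
  A ∘L S = (ContinuousLinearMap.adjoint T) ∘L A ∧ ∀ x, S x ∈ closure (Set.range A)

/-!
For an `A`-unit vector `x`, the `A`-adjoint gives `⟨T^♯T x, x⟩_A = ‖T x‖_A²`, so
`c_A(T^♯T) ≤ ‖T x‖_A²`. By AM–GM,
`2 √(α(1-α)) |⟨T x, x⟩_A| ‖T x‖_A ≤ α |⟨T x, x⟩_A|² + (1-α) ‖T x‖_A² ≤ ‖T‖_{A,α}²`,
and taking the supremum over `x` gives the bound. The polarization identity yields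
`‖T x‖_A ≤ 2 w_A(T)`, which is what makes `‖T‖_{A,α}` a genuine supremum when `w_A(T) < ∞`.
-/

section SemiInner

omit [CompleteSpace H]

variable {A : H →L[ℂ] H}

lemma aNorm_nonneg (x : H) : 0 ≤ aNorm A x := Real.sqrt_nonneg _

lemma conj_aInner (hA : A.IsPositive) (x y : H) :
    starRingEnd ℂ (aInner A x y) = aInner A y x := by
  rw [aInner, aInner, inner_conj_symm, hA.inner_left_eq_inner_right]

lemma re_aInner_self_nonneg (hA : A.IsPositive) (x : H) : 0 ≤ (aInner A x x).re := hA.2 x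

noncomputable abbrev aInnerCore (hA : A.IsPositive) : PreInnerProductSpace.Core ℂ H where
  inner := aInner A
  conj_inner_symm x y := conj_aInner hA y x
  re_inner_nonneg := re_aInner_self_nonneg hA
  add_left x y z := by simp only [aInner, map_add, inner_add_left]
  smul_left x y r := by simp only [aInner, map_smul, inner_smul_left]

lemma sq_aNorm (hA : A.IsPositive) (x : H) : aNorm A x ^ 2 = (aInner A x x).re :=
  Real.sq_sqrt (re_aInner_self_nonneg hA x)

lemma norm_aInner_self (hA : A.IsPositive) (x : H) : ‖aInner A x x‖ = aNorm A x ^ 2 := by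
  have hreal : aInner A x x = ((aInner A x x).re : ℂ) :=
    (Complex.conj_eq_iff_re.mp (conj_aInner hA x x)).symm
  rw [hreal, Complex.norm_real, Real.norm_of_nonneg (re_aInner_self_nonneg hA x), sq_aNorm hA]

lemma norm_aInner_le (hA : A.IsPositive) (x y : H) :
    ‖aInner A x y‖ ≤ aNorm A x * aNorm A y := by
  have hcs := InnerProductSpace.Core.inner_mul_inner_self_le (c := aInnerCore hA) x y
  change ‖aInner A x y‖ * ‖aInner A y x‖ ≤ (aInner A x x).re * (aInner A y y).re at hcs
  rw [← conj_aInner hA x y, RCLike.norm_conj, ← sq_aNorm hA, ← sq_aNorm hA, ← mul_pow,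
    ← sq] at hcs
  exact (pow_le_pow_iff_left₀ (norm_nonneg _)
    (mul_nonneg (aNorm_nonneg x) (aNorm_nonneg y)) two_ne_zero).mp hcs

lemma norm_aInner_smul_smul (T : H →L[ℂ] H) (c : ℂ) (x : H) :
    ‖aInner A (T (c • x)) (c • x)‖ = ‖c‖ ^ 2 * ‖aInner A (T x) x‖ := by
  simp only [aInner, map_smul, inner_smul_left, inner_smul_right, norm_mul, RCLike.norm_conj]
  ring

lemma aNorm_smul (hA : A.IsPositive) (c : ℂ) (x : H) : aNorm A (c • x) = ‖c‖ * aNorm A x := by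
  have h := norm_aInner_smul_smul (A := A) (ContinuousLinearMap.id ℂ H) c x
  simp only [ContinuousLinearMap.id_apply, norm_aInner_self hA, ← mul_pow] at h
  exact (pow_left_inj₀ (aNorm_nonneg _) (by positivity [aNorm_nonneg (A := A) x]) two_ne_zero).mp h

lemma sum_sq_aNorm_polarization (hA : A.IsPositive) (x y : H) :
    aNorm A (x + y) ^ 2 + aNorm A (x - y) ^ 2 + aNorm A (x + Complex.I • y) ^ 2
      + aNorm A (x - Complex.I • y) ^ 2 = 4 * (aNorm A x ^ 2 + aNorm A y ^ 2) := by
  simp only [sq_aNorm hA, aInner, map_add, map_sub, map_smul, inner_add_left, inner_add_right,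
    inner_sub_left, inner_sub_right, inner_smul_left, inner_smul_right, Complex.conj_I]
  ring_nf
  simp only [Complex.I_sq, Complex.add_re, Complex.sub_re, Complex.mul_re, Complex.neg_re,
    Complex.neg_im, Complex.one_re, Complex.one_im]
  ring

lemma aInner_polarization (T : H →L[ℂ] H) (x y : H) :
    aInner A (T x) y =
      (aInner A (T (x + y)) (x + y) - aInner A (T (x - y)) (x - y)
        - Complex.I * aInner A (T (x + Complex.I • y)) (x + Complex.I • y)
        + Complex.I * aInner A (T (x - Complex.I • y)) (x - Complex.I • y)) / 4 :=
  inner_map_polarization' ((A ∘L T : H →L[ℂ] H) : H →ₗ[ℂ] H) x y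

variable {T : H →L[ℂ] H} {M : ℝ}

lemma norm_aInner_apply_self_le (hA : A.IsPositive)
    (hM : ∀ x, aNorm A x = 1 → ‖aInner A (T x) x‖ ≤ M) (u : H) :
    ‖aInner A (T u) u‖ ≤ M * aNorm A u ^ 2 := by
  rcases (aNorm_nonneg (A := A) u).eq_or_lt with hu | hu
  · simpa [← hu] using norm_aInner_le hA (T u) u
  set t := aNorm A u
  have hunit : aNorm A ((t⁻¹ : ℂ) • u) = 1 := by
    rw [aNorm_smul hA, norm_inv, Complex.norm_real, Real.norm_of_nonneg hu.le,
      inv_mul_cancel₀ hu.ne']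
  have h := hM _ hunit
  rw [norm_aInner_smul_smul, norm_inv, Complex.norm_real, Real.norm_of_nonneg hu.le] at h
  calc ‖aInner A (T u) u‖ = t ^ 2 * ((t⁻¹) ^ 2 * ‖aInner A (T u) u‖) := by field_simp
    _ ≤ t ^ 2 * M := by gcongr
    _ = M * t ^ 2 := mul_comm _ _

lemma norm_aInner_apply_le (hA : A.IsPositive)
    (hM : ∀ u, ‖aInner A (T u) u‖ ≤ M * aNorm A u ^ 2) (x y : H) :
    ‖aInner A (T x) y‖ ≤ M * (aNorm A x ^ 2 + aNorm A y ^ 2) := by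
  rw [aInner_polarization, norm_div, RCLike.norm_ofNat, div_le_iff₀ four_pos]
  calc _ ≤ ‖aInner A (T (x + y)) (x + y)‖ + ‖aInner A (T (x - y)) (x - y)‖
          + ‖aInner A (T (x + Complex.I • y)) (x + Complex.I • y)‖
          + ‖aInner A (T (x - Complex.I • y)) (x - Complex.I • y)‖ := by
        refine (norm_add_le _ _).trans (add_le_add ((norm_sub_le _ _).trans
          (add_le_add (norm_sub_le _ _) ?_)) ?_) <;> simp
    _ ≤ M * (aNorm A (x + y) ^ 2 + aNorm A (x - y) ^ 2 + aNorm A (x + Complex.I • y) ^ 2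
          + aNorm A (x - Complex.I • y) ^ 2) := by
        linarith [hM (x + y), hM (x - y), hM (x + Complex.I • y), hM (x - Complex.I • y)]
    _ = _ := by rw [sum_sq_aNorm_polarization hA]; ring

lemma aNorm_apply_le (hA : A.IsPositive)
    (hM : ∀ u, ‖aInner A (T u) u‖ ≤ M * aNorm A u ^ 2) {x : H} (hx : aNorm A x = 1) :
    aNorm A (T x) ≤ 2 * M := by
  have hM0 : 0 ≤ M := by simpa [hx] using (norm_nonneg _).trans (hM x)
  rcases (aNorm_nonneg (A := A) (T x)).eq_or_lt with hb | hb
  · rw [← hb]; positivity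
  set b := aNorm A (T x)
  have hunit : aNorm A ((b⁻¹ : ℂ) • T x) = 1 := by
    rw [aNorm_smul hA, norm_inv, Complex.norm_real, Real.norm_of_nonneg hb.le,
      inv_mul_cancel₀ hb.ne']
  have h := norm_aInner_apply_le hA hM x ((b⁻¹ : ℂ) • T x)
  rw [hx, hunit, aInner, inner_smul_right, ← aInner, norm_mul, norm_aInner_self hA, norm_inv,
    Complex.norm_real, Real.norm_of_nonneg hb.le] at h
  calc b = b⁻¹ * b ^ 2 := by field_simp
    _ ≤ 2 * M := by linarith

lemma mul_wA_le {m C : ℝ} (hm : 0 ≤ m) (hC : 0 ≤ C)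
    (h : ∀ x, aNorm A x = 1 → m * ‖aInner A (T x) x‖ ≤ C) : m * wA A T ≤ C := by
  rw [wA, ← smul_eq_mul, ← Real.sSup_smul_of_nonneg hm]
  refine Real.sSup_le ?_ hC
  rintro _ ⟨_, ⟨x, hx, rfl⟩, rfl⟩
  exact h x hx

lemma le_alphaNorm_sq (hA : A.IsPositive) {α : ℝ} (hα : α ∈ Set.Icc (0 : ℝ) 1)
    (hM : ∀ x, aNorm A x = 1 → ‖aInner A (T x) x‖ ≤ M) {x : H} (hx : aNorm A x = 1) :
    α * ‖aInner A (T x) x‖ ^ 2 + (1 - α) * aNorm A (T x) ^ 2 ≤ alphaNorm A T α ^ 2 := by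
  obtain ⟨hα0, hα1⟩ := hα
  have hT : ∀ y, aNorm A y = 1 → aNorm A (T y) ≤ 2 * M :=
    fun y hy => aNorm_apply_le hA (norm_aInner_apply_self_le hA hM) hy
  have hbdd : BddAbove {r | ∃ y, aNorm A y = 1 ∧
      r = Real.sqrt (α * ‖aInner A (T y) y‖ ^ 2 + (1 - α) * aNorm A (T y) ^ 2)} := by
    refine ⟨Real.sqrt (M ^ 2 + (2 * M) ^ 2), ?_⟩
    rintro _ ⟨y, hy, rfl⟩
    have ha := hM y hy
    have hb := hT y hy
    have ha0 := norm_nonneg (aInner A (T y) y)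
    have hb0 := aNorm_nonneg (A := A) (T y)
    apply Real.sqrt_le_sqrt
    nlinarith [mul_le_mul ha ha ha0 (ha0.trans ha), mul_le_mul hb hb hb0 (hb0.trans hb)]
  have hle := le_csSup hbdd ⟨x, hx, rfl⟩
  rw [← alphaNorm] at hle
  exact (Real.sqrt_le_left ((Real.sqrt_nonneg _).trans hle)).mp hle

end SemiInner

lemma aInner_comp_apply_self {A T S : H →L[ℂ] H} (hT : IsAAdjoint A T S) (x : H) :
    aInner A ((S ∘L T) x) x = aInner A (T x) (T x) := by
  rw [aInner, comp_apply, ← comp_apply A S, hT.1, comp_apply, adjoint_inner_left, aInner]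

lemma cA_comp_le_sq_aNorm {A T S : H →L[ℂ] H} (hA : A.IsPositive) (hT : IsAAdjoint A T S)
    {x : H} (hx : aNorm A x = 1) : cA A (S ∘L T) ≤ aNorm A (T x) ^ 2 := by
  refine csInf_le ⟨0, ?_⟩ ⟨x, hx, ?_⟩
  · rintro _ ⟨y, _, rfl⟩
    exact norm_nonneg _
  · rw [aInner_comp_apply_self hT, norm_aInner_self hA]

lemma two_mul_sqrt_mul_le {α : ℝ} (hα : α ∈ Set.Icc (0 : ℝ) 1) (a b : ℝ) :
    2 * Real.sqrt (α * (1 - α)) * a * b ≤ α * a ^ 2 + (1 - α) * b ^ 2 := by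
  obtain ⟨hα0, hα1⟩ := hα
  have hsq : Real.sqrt α ^ 2 = α := Real.sq_sqrt hα0
  have hsq' : Real.sqrt (1 - α) ^ 2 = 1 - α := Real.sq_sqrt (sub_nonneg.mpr hα1)
  rw [Real.sqrt_mul hα0]
  nlinarith [sq_nonneg (Real.sqrt α * a - Real.sqrt (1 - α) * b)]

theorem stmt10 (A T S : H →L[ℂ] H) (hA : A.IsPositive) (hT : IsAAdjoint A T S)
    (α : ℝ) (hα : α ∈ Set.Icc (0:ℝ) 1) :
    alphaNorm A T α ^ 2 ≥
      2 * Real.sqrt (α * (1 - α)) * wA A T * Real.sqrt (cA A (S ∘L T)) := by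
  by_cases hW : BddAbove {r | ∃ x, aNorm A x = 1 ∧ r = ‖aInner A (T x) x‖}
  swap
  · -- an unbounded set has the junk supremum `0`
    rw [wA, Real.sSup_of_not_bddAbove hW, mul_zero, zero_mul]
    positivity
  obtain ⟨M, hWM⟩ := hW
  have hM : ∀ x, aNorm A x = 1 → ‖aInner A (T x) x‖ ≤ M := fun x hx => hWM ⟨x, hx, rfl⟩
  have key : ∀ x, aNorm A x = 1 → 2 * Real.sqrt (α * (1 - α)) * Real.sqrt (cA A (S ∘L T))
      * ‖aInner A (T x) x‖ ≤ alphaNorm A T α ^ 2 := fun x hx => calc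
    _ ≤ 2 * Real.sqrt (α * (1 - α)) * ‖aInner A (T x) x‖ * aNorm A (T x) := by
        rw [mul_right_comm]
        gcongr
        exact Real.sqrt_le_left (aNorm_nonneg _) |>.mpr (cA_comp_le_sq_aNorm hA hT hx)
    _ ≤ α * ‖aInner A (T x) x‖ ^ 2 + (1 - α) * aNorm A (T x) ^ 2 := two_mul_sqrt_mul_le hα _ _
    _ ≤ alphaNorm A T α ^ 2 := le_alphaNorm_sq hA hα hM hx
  calc 2 * Real.sqrt (α * (1 - α)) * wA A T * Real.sqrt (cA A (S ∘L T))
      = 2 * Real.sqrt (α * (1 - α)) * Real.sqrt (cA A (S ∘L T)) * wA A T := by ring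
    _ ≤ alphaNorm A T α ^ 2 := mul_wA_le (by positivity) (sq_nonneg _) key
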